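/- In CCSK extended with replication but without marked keys, concurrency of coinitial backward transitions fails: the reachable process !a.P | a[m].P has two distinct coinitial backward transitions, one labeled !a[m] (reversing via the repl₁ rule) and one labeled |_R a[m], and these are not concurrent since !a[m] ⋖ |_R a[m]. -/

import Mathlib

namespace CCSK

/-- Labels: names, co-names, and the silent action τ. -/
inductive Lab : Type
  | name : ℕ → Lab
  | coname : ℕ → Lab
  | tau : Lab
deriving DecidableEq

/-- Complement of a label. -/
def Lab.co : Lab → Lab
  | .name n => .coname n
  | .coname n => .name n
  | .tau => .tau

abbrev Key := ℕ

/-- CCSK processes (with a replication operator for the extended calculus). -/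
inductive Proc : Type
  | nil : Proc
  | pre : Lab → Proc → Proc          -- α.X
  | kpre : Lab → Key → Proc → Proc   -- α[k].X
  | par : Proc → Proc → Proc
  | sum : Proc → Proc → Proc
  | res : Proc → ℕ → Proc            -- X \ a
  | repl : Proc → Proc               -- !X
deriving DecidableEq

/-- Keys occurring in a process. -/
def Proc.keys : Proc → Set Key
  | .nil => ∅
  | .pre _ X => X.keys
  | .kpre _ k X => insert k X.keys
  | .par X Y => X.keys ∪ Y.keys
  | .sum X Y => X.keys ∪ Y.keys
  | .res X _ => X.keys
  | .repl X => X.keys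

/-- A process is standard when it contains no keys. -/
def Proc.std (X : Proc) : Prop := X.keys = ∅

/-- Multiset of keyed-prefix occurrences (label, key). -/
def Proc.keyed : Proc → Multiset (Lab × Key)
  | .nil => 0
  | .pre _ X => X.keyed
  | .kpre a k X => (a, k) ::ₘ X.keyed
  | .par X Y => X.keyed + Y.keyed
  | .sum X Y => X.keyed + Y.keyed
  | .res X _ => X.keyed
  | .repl X => X.keyed

/-- Enhanced keyed labels. -/
inductive ELab : Type
  | base : Lab → Key → ELab          -- α[k]
  | parL : ELab → ELab               -- |_L θ
  | parR : ELab → ELab               -- |_R θ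
  | bang : ELab → ELab               -- !θ (replication)
  | syn : ELab → ELab → ELab         -- ⟨θ_L, θ_R⟩
deriving DecidableEq

/-- Underlying action label ℓ(θ). -/
def ELab.act : ELab → Lab
  | .base a _ => a
  | .parL θ => θ.act
  | .parR θ => θ.act
  | .bang θ => θ.act
  | .syn _ _ => .tau

/-- Key of an enhanced keyed label. -/
def ELab.key : ELab → Key
  | .base _ k => k
  | .parL θ => θ.key
  | .parR θ => θ.key
  | .bang θ => θ.key
  | .syn θ _ => θ.key

/-- Dependency relation ⋖ on enhanced keyed labels (including the extension
for replication labels). -/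
inductive Dep : ELab → ELab → Prop
  | base (a : Lab) (k : Key) (θ : ELab) : Dep (.base a k) θ
  | parL {θ θ'} : Dep θ θ' → Dep (.parL θ) (.parL θ')
  | parR {θ θ'} : Dep θ θ' → Dep (.parR θ) (.parR θ')
  | synSrcL {θL θR θ} : Dep θL θ → Dep (.syn θL θR) θ
  | synSrcR {θL θR θ} : Dep θR θ → Dep (.syn θL θR) θ
  | synTgtL {θ θL θR} : Dep θ θL → Dep θ (.syn θL θR)
  | synTgtR {θ θL θR} : Dep θ θR → Dep θ (.syn θL θR)
  | synSynL {θL θR θL' θR'} : Dep θL θL' → Dep (.syn θL θR) (.syn θL' θR')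
  | synSynR {θL θR θL' θR'} : Dep θR θR' → Dep (.syn θL θR) (.syn θL' θR')
  | bangBang (θ : ELab) : Dep (.bang θ) (.bang θ)
  | bangParL (θ θ' : ELab) : Dep (.bang θ) (.parL θ')
  | bangParRSynL (θL θR θ'' : ELab) : Dep (.bang (.syn θL θR)) (.parR (.parL θ''))
  | bangParRSynR (θL θR θ'' : ELab) : Dep (.bang (.syn θL θR)) (.parR (.parR θ''))
  | bangParR {θ θ' : ELab} : Dep θ θ' → Dep (.bang θ) (.parR θ')

/-- Concurrency of labels: no dependency in either direction. -/
def Conc (θ₁ θ₂ : ELab) : Prop := ¬ Dep θ₁ θ₂ ∧ ¬ Dep θ₂ θ₁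

/-- The proved forward LTS for CCSK (without replication rules). -/
inductive Fwd : Proc → ELab → Proc → Prop
  | act {a k X} : Proc.std X → Fwd (.pre a X) (.base a k) (.kpre a k X)
  | pre {a : Lab} {k : Key} {X X' : Proc} {θ : ELab} : Fwd X θ X' → θ.key ≠ k →
      Fwd (.kpre a k X) θ (.kpre a k X')
  | res {X X' : Proc} {θ : ELab} {a : ℕ} : Fwd X θ X' → θ.act ≠ .name a → θ.act ≠ .coname a →
      Fwd (X.res a) θ (X'.res a)
  | parL {X X' Y : Proc} {θ : ELab} : Fwd X θ X' → θ.key ∉ Y.keys →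
      Fwd (X.par Y) (.parL θ) (X'.par Y)
  | parR {Y Y' X : Proc} {θ : ELab} : Fwd Y θ Y' → θ.key ∉ X.keys →
      Fwd (X.par Y) (.parR θ) (X.par Y')
  | syn {X X' Y Y' : Proc} {θ₁ θ₂ : ELab} : Fwd X θ₁ X' → Fwd Y θ₂ Y' →
      θ₁.act ≠ .tau → θ₂.act = θ₁.act.co → θ₂.key = θ₁.key →
      Fwd (X.par Y) (.syn (.parL θ₁) (.parR θ₂)) (X'.par Y')
  | sumL {X θ X' Y} : Fwd X θ X' → Proc.std Y → Fwd (X.sum Y) θ (X'.sum Y)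
  | sumR {Y θ Y' X} : Fwd Y θ Y' → Proc.std X → Fwd (X.sum Y) θ (X.sum Y')

/-- The proved backward LTS for CCSK (exact symmetric of the forward one).
`Bwd X θ Y` means `X ⇝[θ] Y`. -/
inductive Bwd : Proc → ELab → Proc → Prop
  | act {a k X} : Proc.std X → Bwd (.kpre a k X) (.base a k) (.pre a X)
  | pre {a : Lab} {k : Key} {X' X : Proc} {θ : ELab} : Bwd X' θ X → θ.key ≠ k →
      Bwd (.kpre a k X') θ (.kpre a k X)
  | res {X' X : Proc} {θ : ELab} {a : ℕ} : Bwd X' θ X → θ.act ≠ .name a → θ.act ≠ .coname a →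
      Bwd (X'.res a) θ (X.res a)
  | parL {X' X Y : Proc} {θ : ELab} : Bwd X' θ X → θ.key ∉ Y.keys →
      Bwd (X'.par Y) (.parL θ) (X.par Y)
  | parR {Y' Y X : Proc} {θ : ELab} : Bwd Y' θ Y → θ.key ∉ X.keys →
      Bwd (X.par Y') (.parR θ) (X.par Y)
  | syn {X' X Y' Y : Proc} {θ₁ θ₂ : ELab} : Bwd X' θ₁ X → Bwd Y' θ₂ Y →
      θ₁.act ≠ .tau → θ₂.act = θ₁.act.co → θ₂.key = θ₁.key →
      Bwd (X'.par Y') (.syn (.parL θ₁) (.parR θ₂)) (X.par Y)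
  | sumL {X' θ X Y} : Bwd X' θ X → Proc.std Y → Bwd (X'.sum Y) θ (X.sum Y)
  | sumR {Y' θ Y X} : Bwd Y' θ Y → Proc.std X → Bwd (X.sum Y') θ (X.sum Y)

/-- Combined LTS: `Step true` is forward, `Step false` is backward. -/
def Step : Bool → Proc → ELab → Proc → Prop
  | true => Fwd
  | false => Bwd

/-- Reachability: connected to a standard process by forward/backward moves. -/
def Reachable (X : Proc) : Prop :=
  ∃ X₀ : Proc, X₀.std ∧
    Relation.ReflTransGen (fun A B => ∃ d θ, Step d A θ B) X₀ X

/-- The proved forward LTS for CCSK extended with replication. -/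
inductive FwdR : Proc → ELab → Proc → Prop
  | act {a k X} : Proc.std X → FwdR (.pre a X) (.base a k) (.kpre a k X)
  | pre {a : Lab} {k : Key} {X X' : Proc} {θ : ELab} : FwdR X θ X' → θ.key ≠ k →
      FwdR (.kpre a k X) θ (.kpre a k X')
  | res {X X' : Proc} {θ : ELab} {a : ℕ} : FwdR X θ X' → θ.act ≠ .name a → θ.act ≠ .coname a →
      FwdR (X.res a) θ (X'.res a)
  | parL {X X' Y : Proc} {θ : ELab} : FwdR X θ X' → θ.key ∉ Y.keys →
      FwdR (X.par Y) (.parL θ) (X'.par Y)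
  | parR {Y Y' X : Proc} {θ : ELab} : FwdR Y θ Y' → θ.key ∉ X.keys →
      FwdR (X.par Y) (.parR θ) (X.par Y')
  | syn {X X' Y Y' : Proc} {θ₁ θ₂ : ELab} : FwdR X θ₁ X' → FwdR Y θ₂ Y' →
      θ₁.act ≠ .tau → θ₂.act = θ₁.act.co → θ₂.key = θ₁.key →
      FwdR (X.par Y) (.syn (.parL θ₁) (.parR θ₂)) (X'.par Y')
  | sumL {X θ X' Y} : FwdR X θ X' → Proc.std Y → FwdR (X.sum Y) θ (X'.sum Y)
  | sumR {Y θ Y' X} : FwdR Y θ Y' → Proc.std X → FwdR (X.sum Y) θ (X.sum Y')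
  | repl1 {X X' : Proc} {θ : ELab} : FwdR X θ X' →
      FwdR (.repl X) (.bang θ) ((Proc.repl X).par X')
  | repl2 {X X' X'' : Proc} {θ₁ θ₂ : ELab} : FwdR X θ₁ X' → FwdR X θ₂ X'' →
      θ₁.act ≠ .tau → θ₂.act = θ₁.act.co → θ₂.key = θ₁.key →
      FwdR (.repl X) (.bang (.syn (.parL θ₁) (.parR θ₂)))
        ((Proc.repl X).par (X'.par X''))

/-- The proved backward LTS for CCSK extended with replication. -/
inductive BwdR : Proc → ELab → Proc → Prop
  | act {a k X} : Proc.std X → BwdR (.kpre a k X) (.base a k) (.pre a X)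
  | pre {a : Lab} {k : Key} {X' X : Proc} {θ : ELab} : BwdR X' θ X → θ.key ≠ k →
      BwdR (.kpre a k X') θ (.kpre a k X)
  | res {X' X : Proc} {θ : ELab} {a : ℕ} : BwdR X' θ X → θ.act ≠ .name a → θ.act ≠ .coname a →
      BwdR (X'.res a) θ (X.res a)
  | parL {X' X Y : Proc} {θ : ELab} : BwdR X' θ X → θ.key ∉ Y.keys →
      BwdR (X'.par Y) (.parL θ) (X.par Y)
  | parR {Y' Y X : Proc} {θ : ELab} : BwdR Y' θ Y → θ.key ∉ X.keys →
      BwdR (X.par Y') (.parR θ) (X.par Y)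
  | syn {X' X Y' Y : Proc} {θ₁ θ₂ : ELab} : BwdR X' θ₁ X → BwdR Y' θ₂ Y →
      θ₁.act ≠ .tau → θ₂.act = θ₁.act.co → θ₂.key = θ₁.key →
      BwdR (X'.par Y') (.syn (.parL θ₁) (.parR θ₂)) (X.par Y)
  | sumL {X' θ X Y} : BwdR X' θ X → Proc.std Y → BwdR (X'.sum Y) θ (X.sum Y)
  | sumR {Y' θ Y X} : BwdR Y' θ Y → Proc.std X → BwdR (X.sum Y') θ (X.sum Y)
  | repl1 {X' X : Proc} {θ : ELab} : BwdR X' θ X →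
      BwdR ((Proc.repl X).par X') (.bang θ) (.repl X)
  | repl2 {X' X'' X : Proc} {θ₁ θ₂ : ELab} : BwdR X' θ₁ X → BwdR X'' θ₂ X →
      θ₁.act ≠ .tau → θ₂.act = θ₁.act.co → θ₂.key = θ₁.key →
      BwdR ((Proc.repl X).par (X'.par X''))
        (.bang (.syn (.parL θ₁) (.parR θ₂))) (.repl X)

/-- Combined extended LTS. -/
def StepR : Bool → Proc → ELab → Proc → Prop
  | true => FwdR
  | false => BwdR

/-- Reachability in the extended calculus. -/
def ReachableR (X : Proc) : Prop :=
  ∃ X₀ : Proc, X₀.std ∧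
    Relation.ReflTransGen (fun A B => ∃ d θ, StepR d A θ B) X₀ X

/-- Traces: sequences of composable (forward or backward) transitions. -/
inductive Trace : Proc → Proc → Type
  | nil (X : Proc) : Trace X X
  | cons {X Y Z : Proc} (d : Bool) (θ : ELab) (s : Step d X θ Y)
      (T : Trace Y Z) : Trace X Z

/-- Composition of traces. -/
def Trace.comp : {X Y Z : Proc} → Trace X Y → Trace Y Z → Trace X Z
  | _, _, _, .nil _, U => U
  | _, _, _, .cons d θ s T, U => .cons d θ s (Trace.comp T U)

/-- Length of a trace. -/
def Trace.length : {X Y : Proc} → Trace X Y → ℕ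
  | _, _, .nil _ => 0
  | _, _, .cons _ _ _ T => Trace.length T + 1

/-- All transitions of a trace have direction `d`. -/
def Trace.AllDir (d : Bool) : {X Y : Proc} → Trace X Y → Prop
  | _, _, .nil _ => True
  | _, _, .cons d' _ _ T => d' = d ∧ Trace.AllDir d T

/-- Causal equivalence of traces: the least equivalence relation, closed under
composition, cancelling a transition followed by its reverse, and swapping the
two sides of a concurrency square. -/
inductive CEq : {X Y : Proc} → Trace X Y → Trace X Y → Prop
  | refl {X Y} (T : Trace X Y) : CEq T T
  | symm {X Y} {T T' : Trace X Y} : CEq T T' → CEq T' T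
  | trans {X Y} {T T' T'' : Trace X Y} : CEq T T' → CEq T' T'' → CEq T T''
  | congr {X Y Z : Proc} {d θ} (s : Step d X θ Y) {T T' : Trace Y Z} :
      CEq T T' → CEq (Trace.cons d θ s T) (Trace.cons d θ s T')
  | cancel {X Y Z : Proc} {d θ} (s : Step d X θ Y) (s' : Step (!d) Y θ X)
      (T : Trace X Z) :
      CEq (Trace.cons d θ s (Trace.cons (!d) θ s' T)) T
  | square {X X₁ X₂ Y Z : Proc} {d₁ d₂ θ₁ θ₂}
      (s₁ : Step d₁ X θ₁ X₁) (t₂ : Step d₂ X₁ θ₂ Y)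
      (s₂ : Step d₂ X θ₂ X₂) (t₁ : Step d₁ X₂ θ₁ Y)
      (hc : Conc θ₁ θ₂) (T : Trace Y Z) :
      CEq (Trace.cons d₁ θ₁ s₁ (Trace.cons d₂ θ₂ t₂ T))
          (Trace.cons d₂ θ₂ s₂ (Trace.cons d₁ θ₁ t₁ T))

/-- Removal of the keyed prefix α[k]. -/
def remP (a : Lab) (k : Key) : Proc → Proc
  | .nil => .nil
  | .pre b X => .pre b X
  | .kpre b m X => if b = a ∧ m = k then X else .kpre b m (remP a k X)
  | .par X Y => .par (remP a k X) (remP a k Y)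
  | .sum X Y => .sum (remP a k X) (remP a k Y)
  | .res X n => .res (remP a k X) n
  | .repl X => .repl (remP a k X)

/-- rem_k^α : remove α[k] and its complement (only α[k] when α = τ). -/
def remK (a : Lab) (k : Key) (X : Proc) : Proc :=
  if a = Lab.tau then remP a k X else remP a k (remP a.co k X)

/-- Left projection of enhanced keyed labels (partial). -/
def projL : ELab → Option ELab
  | .parL θ => some θ
  | .syn (.parL θL) _ => some θL
  | _ => none

/-- Right projection of enhanced keyed labels (partial). -/
def projR : ELab → Option ELab
  | .parR θ => some θ
  | .syn _ (.parR θR) => some θR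
  | _ => none

/-- Projection selector: `true` is left, `false` is right. -/
def eproj : Bool → ELab → Option ELab
  | true => projL
  | false => projR

/-- Component selector for parallel processes. -/
def side (b : Bool) (L R : Proc) : Proc := if b then L else R

/-- Labels of the shapes arising from a parallel composition. -/
def ParShape (θ : ELab) : Prop :=
  (∃ φ, θ = ELab.parL φ) ∨ (∃ φ, θ = ELab.parR φ) ∨
    ∃ φ ψ, θ = ELab.syn (ELab.parL φ) (ELab.parR ψ)

/-- The collapsing function σ identifying ! and |_R prefixes. -/
def collapse : ELab → ELab
  | .base a k => .base a k
  | .parL θ => .parL (collapse θ)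
  | .parR θ => .parR (collapse θ)
  | .bang θ => .parR (collapse θ)
  | .syn θ₁ θ₂ => .syn (collapse θ₁) (collapse θ₂)

/-- Sub-term relation: strips sums, restrictions and executed keyed prefixes.
`Strip X Y` means X is a sub-term of Y. -/
inductive Strip : Proc → Proc → Prop
  | refl (X : Proc) : Strip X X
  | sumL {X Y Z : Proc} : Strip X Y → Strip X (Y.sum Z)
  | sumR {X Y Z : Proc} : Strip X Y → Strip X (Z.sum Y)
  | res {X Y : Proc} {a : ℕ} : Strip X Y → Strip X (Y.res a)
  | kpre {X Y : Proc} {a : Lab} {k : Key} : Strip X Y → Strip X (.kpre a k Y)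

/-- A forward transition of the proved LTS, as an object. -/
structure FTrans where
  src : Proc
  lab : ELab
  tgt : Proc
  ok : Fwd src lab tgt

/-- A backward transition of the proved LTS, as an object. -/
structure BTrans where
  src : Proc
  lab : ELab
  tgt : Proc
  ok : Bwd src lab tgt

theorem Proc.std_repl_pre {a : Lab} {X : Proc} (hX : X.std) : (Proc.repl (Proc.pre a X)).std :=
  hX

theorem Proc.notMem_keys_of_std {X : Proc} (hX : X.std) (k : Key) : k ∉ X.keys :=
  hX ▸ Set.notMem_empty k

theorem ReachableR.of_fwdR {X Y : Proc} {θ : ELab} (hX : X.std) (h : FwdR X θ Y) :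
    ReachableR Y :=
  ⟨X, hX, .single ⟨true, θ, h⟩⟩

theorem BwdR.parR_of_std {X Y Y' : Proc} {θ : ELab} (h : BwdR Y' θ Y) (hX : X.std) :
    BwdR (X.par Y') (.parR θ) (X.par Y) :=
  .parR h (Proc.notMem_keys_of_std hX θ.key)

theorem Dep.bang_base_parR (a : Lab) (k : Key) (θ : ELab) :
    Dep (.bang (.base a k)) (.parR θ) :=
  .bangParR (.base a k θ)

theorem not_conc_of_dep {θ₁ θ₂ : ELab} (h : Dep θ₁ θ₂) : ¬ Conc θ₁ θ₂ :=
  fun hc => hc.1 h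

end CCSK

open CCSK in
/-- In CCSK with replication (without marked keys), concurrency of coinitial
backward transitions fails: !a.P | a[m].P has two distinct coinitial backward
transitions, labelled !a[m] and |_R a[m], which are not concurrent since
!a[m] ⋖ |_R a[m]. -/
theorem backward_conc_fails_with_repl : ∀ (a : Lab) (m : Key) (P : Proc),
    P.std →
    ReachableR ((Proc.repl (Proc.pre a P)).par (Proc.kpre a m P)) ∧
    BwdR ((Proc.repl (Proc.pre a P)).par (Proc.kpre a m P))
      (ELab.bang (ELab.base a m)) (Proc.repl (Proc.pre a P)) ∧
    BwdR ((Proc.repl (Proc.pre a P)).par (Proc.kpre a m P))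
      (ELab.parR (ELab.base a m))
      ((Proc.repl (Proc.pre a P)).par (Proc.pre a P)) ∧
    Dep (ELab.bang (ELab.base a m)) (ELab.parR (ELab.base a m)) ∧
    ¬ Conc (ELab.bang (ELab.base a m)) (ELab.parR (ELab.base a m)) := by
  intro a m P hP
  have hdep := Dep.bang_base_parR a m (.base a m)
  exact ⟨ReachableR.of_fwdR (Proc.std_repl_pre hP) (.repl1 (.act hP)),
    .repl1 (.act hP),
    BwdR.parR_of_std (.act hP) (Proc.std_repl_pre hP),
    hdep, not_conc_of_dep hdep⟩
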